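/- arXiv:2206.06807 — 6 statements merged into one kernel-verified Lean document; each statement's English description precedes it below -/
import Mathlib

section
/- Let e be a (2,2,2) empirical model and suppose γ ∈ [0,1] and e' is an A→B-causal empirical model with γ · e'_{(i)}(o) ≤ e_{(i)}(o) for all inputs i and outputs o. Then for every i_A ∈ {0,1} and every o_A ∈ {0,1}, γ ≤ 1 − |m(i_A, 0)(o_A) − m(i_A, 1)(o_A)|, where m(i_A, i_B)(o_A) = Σ_{o_B} e_{(i_A,i_B)}(o_A, o_B) is the A-marginal of e. -/
/-- A (2,2,2) empirical model: a probability distribution on output pairs for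
each input pair. -/
def IsEM (e : Bool × Bool → Bool × Bool → ℝ) : Prop :=
  (∀ i o, 0 ≤ e i o) ∧ (∀ i, ∑ o : Bool × Bool, e i o = 1)

/-- The A-marginal `m(i_A, i_B)(o_A) = Σ_{o_B} e_{(i_A,i_B)}(o_A, o_B)`. -/
def margA (e : Bool × Bool → Bool × Bool → ℝ) (iA iB oA : Bool) : ℝ :=
  ∑ oB : Bool, e (iA, iB) (oA, oB)

/-- Compatibility with the causal order A → B: the A-marginal is independent of `i_B`. -/
def CausalAB (e : Bool × Bool → Bool × Bool → ℝ) : Prop :=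
  ∀ iA iB iB' oA, margA e iA iB oA = margA e iA iB' oA

/-- The causal fraction of `e` with respect to A → B. -/
noncomputable def causalFractionAB (e : Bool × Bool → Bool × Bool → ℝ) : ℝ :=
  sSup {γ : ℝ | γ ∈ Set.Icc (0 : ℝ) 1 ∧
    ∃ e', IsEM e' ∧ CausalAB e' ∧ ∀ i o, γ * e' i o ≤ e i o}

lemma marg_sum_one (e : Bool × Bool → Bool × Bool → ℝ) (he : IsEM e) (iA iB oA : Bool) :
    margA e iA iB oA + margA e iA iB (!oA) = 1 := by
  have h := he.2 (iA, iB)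
  rw [Fintype.sum_prod_type] at h
  cases oA <;> simp [margA, Fintype.sum_bool] at h ⊢ <;> linarith

lemma marg_lower (e e' : Bool × Bool → Bool × Bool → ℝ) (γ : ℝ)
    (hle : ∀ i o, γ * e' i o ≤ e i o) (iA iB oA : Bool) :
    γ * margA e' iA iB oA ≤ margA e iA iB oA := by
  unfold margA
  rw [Finset.mul_sum]
  exact Finset.sum_le_sum fun oB _ => hle _ _

/-- upper bound on achievable causal fractions via the A-marginals. -/
theorem causalFraction_upper_bound (e e' : Bool × Bool → Bool × Bool → ℝ) (γ : ℝ)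
    (hγ : γ ∈ Set.Icc (0 : ℝ) 1) (he : IsEM e) (he' : IsEM e') (hc' : CausalAB e')
    (hle : ∀ i o, γ * e' i o ≤ e i o) :
    ∀ iA oA : Bool, γ ≤ 1 - |margA e iA false oA - margA e iA true oA| := by
  intro iA oA
  obtain ⟨hγ0, hγ1⟩ := hγ
  have hs0 := marg_sum_one e he iA false oA
  have hs1 := marg_sum_one e he iA true oA
  have hs' := marg_sum_one e' he' iA false oA
  have l00 := marg_lower e e' γ hle iA false oA
  have l01 := marg_lower e e' γ hle iA false (!oA)
  have l10 := marg_lower e e' γ hle iA true oA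
  have l11 := marg_lower e e' γ hle iA true (!oA)
  have c0 := hc' iA true false oA
  have c1 := hc' iA true false (!oA)
  rw [c0] at l10
  rw [c1] at l11
  have habs : |margA e iA false oA - margA e iA true oA| ≤ 1 - γ := by
    rw [abs_le]
    constructor <;> nlinarith
  linarith [abs_nonneg (margA e iA false oA - margA e iA true oA)]
end

section
/- Let e be a (2,2,2) empirical model whose A-marginals m(i_A, i_B)(o_A) = Σ_{o_B} e_{(i_A,i_B)}(o_A, o_B) are all strictly positive. Define γ* = min over i_A ∈ {0,1} and o_A ∈ {0,1} of 1 − |m(i_A,0)(o_A) − m(i_A,1)(o_A)|, and assume γ* > 0. Then there exists an A→B-causal empirical model e' such that γ* · e'_{(i)}(o) ≤ e_{(i)}(o) for all inputs i and outputs o. Hence the causal fraction of e with respect to A → B equals γ*. -/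
/-!
For each `i_A`, any A→B-causal `e'` with `γ • e' ≤ e` has an A-marginal `m'(i_A)` satisfying
`γ · m'(i_A)(o_A) ≤ min_{i_B} m(i_A, i_B)(o_A)`; summing over `o_A` bounds `γ` by the overlap
`Σ_{o_A} min_{i_B} m(i_A, i_B)(o_A) = 1 - |m(i_A,0)(0) - m(i_A,1)(0)|`. Conversely, rescaling each
`e_{(i_A,i_B)}(o_A, ·)` so that its A-marginal becomes the normalised overlap
`min_{i_B} m(i_A, i_B)(o_A) / overlap(i_A)` gives a causal model attaining the smallest overlap.
-/

lemma min_add_min_one_sub (a b : ℝ) : min a b + min (1 - a) (1 - b) = 1 - |a - b| := by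
  rcases le_total a b with h | h
  · rw [min_eq_left h, min_eq_right (by linarith), abs_of_nonpos (by linarith)]
    ring
  · rw [min_eq_right h, min_eq_left (by linarith), abs_of_nonneg (by linarith)]
    ring

section CausalFraction

variable {e : Bool × Bool → Bool × Bool → ℝ}

lemma sum_eq_margA_false_add_true (e : Bool × Bool → Bool × Bool → ℝ) (i : Bool × Bool) :
    ∑ o, e i o = margA e i.1 i.2 false + margA e i.1 i.2 true := by
  rw [Fintype.sum_prod_type, Fintype.sum_bool, add_comm]
  rfl

lemma IsEM.margA_false_add_true (he : IsEM e) (iA iB : Bool) :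
    margA e iA iB false + margA e iA iB true = 1 :=
  (sum_eq_margA_false_add_true e (iA, iB)).symm.trans (he.2 _)

lemma margA_nonneg (hnn : ∀ i o, 0 ≤ e i o) (iA iB oA : Bool) : 0 ≤ margA e iA iB oA :=
  Finset.sum_nonneg fun _ _ => hnn _ _

lemma mul_margA_le {e' : Bool × Bool → Bool × Bool → ℝ} {γ : ℝ}
    (hle : ∀ i o, γ * e' i o ≤ e i o) (iA iB oA : Bool) :
    γ * margA e' iA iB oA ≤ margA e iA iB oA := by
  rw [margA, Finset.mul_sum]
  exact Finset.sum_le_sum fun _ _ => hle _ _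

noncomputable def margAMin (e : Bool × Bool → Bool × Bool → ℝ) (iA oA : Bool) : ℝ :=
  min (margA e iA false oA) (margA e iA true oA)

noncomputable def overlapA (e : Bool × Bool → Bool × Bool → ℝ) (iA : Bool) : ℝ :=
  margAMin e iA false + margAMin e iA true

lemma margAMin_le_margA (iA iB oA : Bool) : margAMin e iA oA ≤ margA e iA iB oA := by
  cases iB
  · exact min_le_left _ _
  · exact min_le_right _ _

lemma margAMin_nonneg (hnn : ∀ i o, 0 ≤ e i o) (iA oA : Bool) : 0 ≤ margAMin e iA oA :=
  le_min (margA_nonneg hnn _ _ _) (margA_nonneg hnn _ _ _)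

lemma overlapA_nonneg (hnn : ∀ i o, 0 ≤ e i o) (iA : Bool) : 0 ≤ overlapA e iA :=
  add_nonneg (margAMin_nonneg hnn _ _) (margAMin_nonneg hnn _ _)

lemma IsEM.overlapA_eq (he : IsEM e) (iA oA : Bool) :
    overlapA e iA = 1 - |margA e iA false oA - margA e iA true oA| := by
  have h₀ : margA e iA false true = 1 - margA e iA false false := by
    linarith [he.margA_false_add_true iA false]
  have h₁ : margA e iA true true = 1 - margA e iA true false := by
    linarith [he.margA_false_add_true iA true]
  have hfalse : overlapA e iA =
      1 - |margA e iA false false - margA e iA true false| := by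
    rw [overlapA, margAMin, margAMin, h₀, h₁, min_add_min_one_sub]
  cases oA
  · exact hfalse
  · rw [hfalse, ← abs_neg]
    congr 2
    linarith

lemma IsEM.overlapA_le_one (he : IsEM e) (iA : Bool) : overlapA e iA ≤ 1 := by
  rw [he.overlapA_eq iA false]
  linarith [abs_nonneg (margA e iA false false - margA e iA true false)]

lemma le_overlapA_of_causalAB {e' : Bool × Bool → Bool × Bool → ℝ} {γ : ℝ} (he' : IsEM e')
    (hc : CausalAB e') (hle : ∀ i o, γ * e' i o ≤ e i o) (iA : Bool) :
    γ ≤ overlapA e iA := by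
  have hmin (oA : Bool) : γ * margA e' iA false oA ≤ margAMin e iA oA :=
    le_min (mul_margA_le hle _ _ _) (hc iA false true oA ▸ mul_margA_le hle _ _ _)
  calc γ = γ * margA e' iA false false + γ * margA e' iA false true := by
        rw [← mul_add, he'.margA_false_add_true, mul_one]
    _ ≤ overlapA e iA := add_le_add (hmin false) (hmin true)

/-- Where `m(i_A,i_B)(o_A) = 0` the junk value `x / 0 = 0` is harmless, as then also
`margAMin e i_A o_A = 0`. -/
noncomputable def overlapModel (e : Bool × Bool → Bool × Bool → ℝ) :
    Bool × Bool → Bool × Bool → ℝ :=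
  fun i o => margAMin e i.1 o.1 / overlapA e i.1 * (e i o / margA e i.1 i.2 o.1)

lemma margA_overlapModel (hnn : ∀ i o, 0 ≤ e i o) (iA iB oA : Bool) :
    margA (overlapModel e) iA iB oA = margAMin e iA oA / overlapA e iA := by
  have hsum : margA (overlapModel e) iA iB oA =
      margAMin e iA oA / overlapA e iA * (margA e iA iB oA / margA e iA iB oA) := by
    simp only [margA, overlapModel, ← Finset.mul_sum, Finset.sum_div]
  rcases (margA_nonneg hnn iA iB oA).eq_or_lt with hzero | hpos
  · have hmin : margAMin e iA oA = 0 :=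
      le_antisymm (hzero ▸ margAMin_le_margA iA iB oA) (margAMin_nonneg hnn iA oA)
    simp [hsum, hmin]
  · rw [hsum, div_self hpos.ne', mul_one]

lemma causalAB_overlapModel (hnn : ∀ i o, 0 ≤ e i o) : CausalAB (overlapModel e) := by
  intro iA iB iB' oA
  rw [margA_overlapModel hnn, margA_overlapModel hnn]

lemma isEM_overlapModel (hnn : ∀ i o, 0 ≤ e i o) (hs : ∀ iA, 0 < overlapA e iA) :
    IsEM (overlapModel e) := by
  refine ⟨fun i o => ?_, fun i => ?_⟩
  · have := margAMin_nonneg hnn i.1 o.1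
    have := overlapA_nonneg hnn i.1
    have := margA_nonneg hnn i.1 i.2 o.1
    have := hnn i o
    unfold overlapModel
    positivity
  · rw [sum_eq_margA_false_add_true, margA_overlapModel hnn, margA_overlapModel hnn, ← add_div]
    exact div_self (hs i.1).ne'

lemma mul_overlapModel_le (hnn : ∀ i o, 0 ≤ e i o) {γ : ℝ} (hγ : ∀ iA, γ ≤ overlapA e iA)
    (i o : Bool × Bool) : γ * overlapModel e i o ≤ e i o := by
  have hratio : γ * margAMin e i.1 o.1 / (overlapA e i.1 * margA e i.1 i.2 o.1) ≤ 1 := by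
    refine div_le_one_of_le₀ ?_ (mul_nonneg (overlapA_nonneg hnn _) (margA_nonneg hnn _ _ _))
    calc γ * margAMin e i.1 o.1 ≤ overlapA e i.1 * margAMin e i.1 o.1 :=
          mul_le_mul_of_nonneg_right (hγ _) (margAMin_nonneg hnn _ _)
      _ ≤ overlapA e i.1 * margA e i.1 i.2 o.1 :=
          mul_le_mul_of_nonneg_left (margAMin_le_margA _ _ _) (overlapA_nonneg hnn _)
  calc γ * overlapModel e i o
      = γ * margAMin e i.1 o.1 / (overlapA e i.1 * margA e i.1 i.2 o.1) * e i o := by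
        rw [overlapModel]
        ring
    _ ≤ 1 * e i o := mul_le_mul_of_nonneg_right hratio (hnn i o)
    _ = e i o := one_mul _

theorem IsEM.isGreatest_causalFraction (he : IsEM e)
    (hs : 0 < min (overlapA e false) (overlapA e true)) :
    IsGreatest {γ : ℝ | γ ∈ Set.Icc (0 : ℝ) 1 ∧
        ∃ e', IsEM e' ∧ CausalAB e' ∧ ∀ i o, γ * e' i o ≤ e i o}
      (min (overlapA e false) (overlapA e true)) := by
  have hle_overlap (iA : Bool) : min (overlapA e false) (overlapA e true) ≤ overlapA e iA := by
    cases iA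
    exacts [min_le_left _ _, min_le_right _ _]
  refine ⟨⟨⟨hs.le, (hle_overlap false).trans (he.overlapA_le_one false)⟩,
      overlapModel e, isEM_overlapModel he.1 fun iA => hs.trans_le (hle_overlap iA),
      causalAB_overlapModel he.1, mul_overlapModel_le he.1 hle_overlap⟩, ?_⟩
  rintro γ ⟨-, e', he', hc, hle⟩
  exact le_min (le_overlapA_of_causalAB he' hc hle false) (le_overlapA_of_causalAB he' hc hle true)

end CausalFraction

theorem causalFraction_attained_general (e : Bool × Bool → Bool × Bool → ℝ)
    (he : IsEM e)
    (γstar : ℝ)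
    (hγstar : γstar =
      min (min (1 - |margA e false false false - margA e false true false|)
               (1 - |margA e false false true - margA e false true true|))
          (min (1 - |margA e true false false - margA e true true false|)
               (1 - |margA e true false true - margA e true true true|)))
    (hpos' : 0 < γstar) :
    (∃ e', IsEM e' ∧ CausalAB e' ∧ ∀ i o, γstar * e' i o ≤ e i o) ∧
      causalFractionAB e = γstar := by
  have hγ : γstar = min (overlapA e false) (overlapA e true) := by
    simp only [hγstar, ← he.overlapA_eq, min_self]
  subst hγ
  have hgreatest := he.isGreatest_causalFraction hpos'
  exact ⟨hgreatest.1.2, hgreatest.csSup_eq⟩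

/-- if all A-marginals are strictly positive and
`γ* = min_{i_A, o_A} (1 - |m(i_A,0)(o_A) - m(i_A,1)(o_A)|) > 0`, then `γ*` is
achieved by some A→B-causal model, and the causal fraction equals `γ*`. -/
theorem causalFraction_attained (e : Bool × Bool → Bool × Bool → ℝ)
    (he : IsEM e) (hpos : ∀ iA iB oA : Bool, 0 < margA e iA iB oA)
    (γstar : ℝ)
    (hγstar : γstar =
      min (min (1 - |margA e false false false - margA e false true false|)
               (1 - |margA e false false true - margA e false true true|))
          (min (1 - |margA e true false false - margA e true true false|)
               (1 - |margA e true false true - margA e true true true|)))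
    (hpos' : 0 < γstar) :
    (∃ e', IsEM e' ∧ CausalAB e' ∧ ∀ i o, γstar * e' i o ≤ e i o) ∧
      causalFractionAB e = γstar :=
  causalFraction_attained_general e he γstar hγstar hpos'
end

section
/- A (2,2,2) empirical model e is no-signalling (both its A-marginal is independent of i_B and its B-marginal is independent of i_A) if and only if its causal fraction with respect to A → B and its causal fraction with respect to B → A both equal 1. -/
/-- The B-marginal `Σ_{o_A} e_{(i_A,i_B)}(o_A, o_B)`. -/
def margB (e : Bool × Bool → Bool × Bool → ℝ) (iA iB oB : Bool) : ℝ :=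
  ∑ oA : Bool, e (iA, iB) (oA, oB)

/-- Compatibility with the causal order B → A: the B-marginal is independent of `i_A`. -/
def CausalBA (e : Bool × Bool → Bool × Bool → ℝ) : Prop :=
  ∀ iA iA' iB oB, margB e iA iB oB = margB e iA' iB oB

/-- The causal fraction of `e` with respect to B → A. -/
noncomputable def causalFractionBA (e : Bool × Bool → Bool × Bool → ℝ) : ℝ :=
  sSup {γ : ℝ | γ ∈ Set.Icc (0 : ℝ) 1 ∧
    ∃ e', IsEM e' ∧ CausalBA e' ∧ ∀ i o, γ * e' i o ≤ e i o}

lemma aux_sum_expand (f : Bool × Bool → ℝ) :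
    ∑ o : Bool × Bool, f o
      = f (false,false) + f (false,true) + f (true,false) + f (true,true) := by
  simp [Fintype.sum_prod_type, Fintype.sum_bool]
  ring

lemma aux_sandwichA (e e' : Bool × Bool → Bool × Bool → ℝ) (he : IsEM e) (he' : IsEM e')
    (γ : ℝ) (hγ0 : 0 ≤ γ) (h : ∀ i o, γ * e' i o ≤ e i o) (iA iB oA : Bool) :
    γ * margA e' iA iB oA ≤ margA e iA iB oA ∧
    margA e iA iB oA ≤ γ * margA e' iA iB oA + (1 - γ) := by
  have hs := he.2 (iA, iB)
  have hs' := he'.2 (iA, iB)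
  rw [aux_sum_expand] at hs hs'
  have h1 := h (iA,iB) (false,false)
  have h2 := h (iA,iB) (false,true)
  have h3 := h (iA,iB) (true,false)
  have h4 := h (iA,iB) (true,true)
  cases oA <;> simp [margA, Fintype.sum_bool] <;> constructor <;> nlinarith

lemma aux_sandwichB (e e' : Bool × Bool → Bool × Bool → ℝ) (he : IsEM e) (he' : IsEM e')
    (γ : ℝ) (hγ0 : 0 ≤ γ) (h : ∀ i o, γ * e' i o ≤ e i o) (iA iB oB : Bool) :
    γ * margB e' iA iB oB ≤ margB e iA iB oB ∧
    margB e iA iB oB ≤ γ * margB e' iA iB oB + (1 - γ) := by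
  have hs := he.2 (iA, iB)
  have hs' := he'.2 (iA, iB)
  rw [aux_sum_expand] at hs hs'
  have h1 := h (iA,iB) (false,false)
  have h2 := h (iA,iB) (false,true)
  have h3 := h (iA,iB) (true,false)
  have h4 := h (iA,iB) (true,true)
  cases oB <;> simp [margB, Fintype.sum_bool] <;> constructor <;> nlinarith

lemma aux_quarter : IsEM (fun _ _ => (1/4 : ℝ)) := by
  constructor
  · intro i o; norm_num
  · intro i; rw [aux_sum_expand]; norm_num

/-- a (2,2,2) empirical model is no-signalling iff both its causal
fractions (for A → B and for B → A) equal 1. -/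
theorem noSignalling_iff_causalFractions_eq_one
    (e : Bool × Bool → Bool × Bool → ℝ) (he : IsEM e) :
    (CausalAB e ∧ CausalBA e) ↔
      (causalFractionAB e = 1 ∧ causalFractionBA e = 1) := by
  set SA := {γ : ℝ | γ ∈ Set.Icc (0 : ℝ) 1 ∧
    ∃ e', IsEM e' ∧ CausalAB e' ∧ ∀ i o, γ * e' i o ≤ e i o} with hSA
  set SB := {γ : ℝ | γ ∈ Set.Icc (0 : ℝ) 1 ∧
    ∃ e', IsEM e' ∧ CausalBA e' ∧ ∀ i o, γ * e' i o ≤ e i o} with hSB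
  have hbddA : BddAbove SA := ⟨1, fun x hx => hx.1.2⟩
  have hbddB : BddAbove SB := ⟨1, fun x hx => hx.1.2⟩
  have hneA : SA.Nonempty := by
    refine ⟨0, ⟨le_refl 0, zero_le_one⟩, fun _ _ => 1/4, aux_quarter, ?_, ?_⟩
    · intro iA iB iB' oA; rfl
    · intro i o; rw [zero_mul]; exact he.1 i o
  have hneB : SB.Nonempty := by
    refine ⟨0, ⟨le_refl 0, zero_le_one⟩, fun _ _ => 1/4, aux_quarter, ?_, ?_⟩
    · intro iA iA' iB oB; rfl
    · intro i o; rw [zero_mul]; exact he.1 i o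
  constructor
  · rintro ⟨hAB, hBA⟩
    constructor
    · have h1 : (1 : ℝ) ∈ SA :=
        ⟨⟨zero_le_one, le_refl 1⟩, e, he, hAB, fun i o => by rw [one_mul]⟩
      exact le_antisymm (csSup_le hneA fun x hx => hx.1.2) (le_csSup hbddA h1)
    · have h1 : (1 : ℝ) ∈ SB :=
        ⟨⟨zero_le_one, le_refl 1⟩, e, he, hBA, fun i o => by rw [one_mul]⟩
      exact le_antisymm (csSup_le hneB fun x hx => hx.1.2) (le_csSup hbddB h1)
  · rintro ⟨hA, hB⟩
    constructor
    · intro iA iB iB' oA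
      have key : ∀ ε : ℝ, 0 < ε → |margA e iA iB oA - margA e iA iB' oA| ≤ ε := by
        intro ε hε
        have hlt : 1 - ε < sSup SA := by
          rw [show sSup SA = causalFractionAB e from rfl, hA]; linarith
        obtain ⟨γ, hγS, hγ⟩ := exists_lt_of_lt_csSup hneA hlt
        obtain ⟨⟨hγ0, hγ1⟩, e', he', hC, hle⟩ := hγS
        have s1 := aux_sandwichA e e' he he' γ hγ0 hle iA iB oA
        have s2 := aux_sandwichA e e' he he' γ hγ0 hle iA iB' oA
        have hm := hC iA iB iB' oA
        rw [abs_sub_le_iff]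
        constructor <;> [skip; skip] <;> nlinarith [s1.1, s1.2, s2.1, s2.2]
      have h0 : |margA e iA iB oA - margA e iA iB' oA| ≤ 0 := by
        by_contra h
        push_neg at h
        have := key (|margA e iA iB oA - margA e iA iB' oA| / 2) (by linarith)
        linarith
      have := abs_nonpos_iff.mp h0
      linarith [sub_eq_zero.mp this]
    · intro iA iA' iB oB
      have key : ∀ ε : ℝ, 0 < ε → |margB e iA iB oB - margB e iA' iB oB| ≤ ε := by
        intro ε hε
        have hlt : 1 - ε < sSup SB := by
          rw [show sSup SB = causalFractionBA e from rfl, hB]; linarith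
        obtain ⟨γ, hγS, hγ⟩ := exists_lt_of_lt_csSup hneB hlt
        obtain ⟨⟨hγ0, hγ1⟩, e', he', hC, hle⟩ := hγS
        have s1 := aux_sandwichB e e' he he' γ hγ0 hle iA iB oB
        have s2 := aux_sandwichB e e' he he' γ hγ0 hle iA' iB oB
        have hm := hC iA iA' iB oB
        rw [abs_sub_le_iff]
        constructor <;> [skip; skip] <;> nlinarith [s1.1, s1.2, s2.1, s2.2]
      have h0 : |margB e iA iB oB - margB e iA' iB oB| ≤ 0 := by
        by_contra h
        push_neg at h
        have := key (|margB e iA iB oB - margB e iA' iB oB| / 2) (by linarith)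
        linarith
      have := abs_nonpos_iff.mp h0
      linarith [sub_eq_zero.mp this]
end

section
/- Let e be the (2,2,2) empirical model with rows e_{(0,0)} = (0, 1/7, 0, 6/7), e_{(0,1)} = (2/3, 1/6, 1/6, 0), e_{(1,0)} = (1/4, 0, 1/4, 1/2), e_{(1,1)} = (1/5, 3/5, 1/5, 0). Then the causal fraction of e with respect to A → B equals 13/42: there exists an A→B-causal empirical model e' with (13/42) · e' ≤ e componentwise, and no γ > 13/42 admits such a model. -/
/-- The concrete empirical model of Example 2.2.1 of the paper. -/
noncomputable def eEx : Bool × Bool → Bool × Bool → ℝ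
  | (false, false), (false, false) => 0
  | (false, false), (false, true)  => 1/7
  | (false, false), (true, false)  => 0
  | (false, false), (true, true)   => 6/7
  | (false, true),  (false, false) => 2/3
  | (false, true),  (false, true)  => 1/6
  | (false, true),  (true, false)  => 1/6
  | (false, true),  (true, true)   => 0
  | (true, false),  (false, false) => 1/4
  | (true, false),  (false, true)  => 0
  | (true, false),  (true, false)  => 1/4
  | (true, false),  (true, true)   => 1/2
  | (true, true),   (false, false) => 1/5
  | (true, true),   (false, true)  => 3/5
  | (true, true),   (true, false)  => 1/5
  | (true, true),   (true, true)   => 0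

noncomputable def eW : Bool × Bool → Bool × Bool → ℝ
  | (false, false), (false, false) => 0
  | (false, false), (false, true)  => 6/13
  | (false, false), (true, false)  => 0
  | (false, false), (true, true)   => 7/13
  | (false, true),  (false, false) => 6/13
  | (false, true),  (false, true)  => 0
  | (false, true),  (true, false)  => 7/13
  | (false, true),  (true, true)   => 0
  | (true, _), (false, false) => 1/2
  | (true, _), (false, true)  => 0
  | (true, _), (true, false)  => 1/2
  | (true, _), (true, true)   => 0

lemma eW_isEM : IsEM eW := by
  constructor
  · rintro ⟨a,b⟩ ⟨c,d⟩; cases a <;> cases b <;> cases c <;> cases d <;> norm_num [eW]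
  · rintro ⟨a,b⟩
    cases a <;> cases b <;> simp [Fintype.sum_prod_type, eW] <;> norm_num

lemma eW_causal : CausalAB eW := by
  intro iA iB iB' oA
  cases iA <;> cases iB <;> cases iB' <;> cases oA <;> simp [margA, eW]

lemma eW_le : ∀ i o, (13/42 : ℝ) * eW i o ≤ eEx i o := by
  rintro ⟨a,b⟩ ⟨c,d⟩; cases a <;> cases b <;> cases c <;> cases d <;> norm_num [eW, eEx]

lemma upper : ∀ γ : ℝ, 13/42 < γ →
    ¬ ∃ e', IsEM e' ∧ CausalAB e' ∧ ∀ i o, γ * e' i o ≤ eEx i o := by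
  rintro γ hγ ⟨e', ⟨hpos, hsum⟩, hc, hle⟩
  have hs := hsum (false, false)
  simp [Fintype.sum_prod_type] at hs
  have hm := hc false false true true
  simp [margA] at hm
  have h1 := hle (false, false) (false, false)
  have h2 := hle (false, false) (false, true)
  have h3 := hle (false, true) (true, false)
  have h4 := hle (false, true) (true, true)
  simp [eEx] at h1 h2 h3 h4
  nlinarith [hpos (false,false) (false,false), hpos (false,true) (true,true)]


/-- the causal fraction of `eEx` with respect to A → B equals
`13/42`: it is achieved by some A→B-causal model and no larger γ is achievable. -/
theorem eEx_causalFraction_eq :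
    causalFractionAB eEx = 13/42 ∧
      (∃ e', IsEM e' ∧ CausalAB e' ∧ ∀ i o, (13/42 : ℝ) * e' i o ≤ eEx i o) ∧
      (∀ γ : ℝ, 13/42 < γ →
        ¬ ∃ e', IsEM e' ∧ CausalAB e' ∧ ∀ i o, γ * e' i o ≤ eEx i o) := by
  have hmem : (13/42 : ℝ) ∈ {γ : ℝ | γ ∈ Set.Icc (0 : ℝ) 1 ∧
      ∃ e', IsEM e' ∧ CausalAB e' ∧ ∀ i o, γ * e' i o ≤ eEx i o} := by
    refine ⟨⟨by norm_num, by norm_num⟩, eW, eW_isEM, eW_causal, eW_le⟩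
  have hub : ∀ x ∈ {γ : ℝ | γ ∈ Set.Icc (0 : ℝ) 1 ∧
      ∃ e', IsEM e' ∧ CausalAB e' ∧ ∀ i o, γ * e' i o ≤ eEx i o}, x ≤ 13/42 := by
    rintro x ⟨-, hx⟩
    by_contra h
    exact upper x (lt_of_not_ge h) hx
  refine ⟨le_antisymm (csSup_le ⟨_, hmem⟩ hub) (le_csSup ⟨_, hub⟩ hmem),
    ⟨eW, eW_isEM, eW_causal, eW_le⟩, upper⟩
end

section
/- Let e be a (2,2,2) empirical model. If for some input i_A and output o_A the A-marginals satisfy m(i_A, 0)(o_A) = 0 and m(i_A, 1)(o_A) = 1, then the only γ ∈ [0,1] for which there exists an A→B-causal model e' with γ · e' ≤ e componentwise is γ = 0. -/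
lemma marg_split (e : Bool × Bool → Bool × Bool → ℝ) (iA iB oA : Bool) :
    margA e iA iB oA + margA e iA iB (!oA) = ∑ o : Bool × Bool, e (iA, iB) o := by
  cases oA <;> simp [margA, Fintype.sum_prod_type, Fin.sum_univ_succ] <;> ring

lemma margA_le (e e' : Bool × Bool → Bool × Bool → ℝ) (γ : ℝ)
    (h : ∀ i o, γ * e' i o ≤ e i o) (iA iB oA : Bool) :
    γ * margA e' iA iB oA ≤ margA e iA iB oA := by
  simp only [margA, Finset.mul_sum]
  exact Finset.sum_le_sum fun oB _ => h _ _

/-- if some A-marginal jumps from 0 to 1 when `i_B` changes, then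
only `γ = 0` admits an A→B-causal sub-model. -/
theorem causalFraction_zero_of_extremal_signalling
    (e : Bool × Bool → Bool × Bool → ℝ) (he : IsEM e) (iA oA : Bool)
    (h0 : margA e iA false oA = 0) (h1 : margA e iA true oA = 1) :
    ∀ γ ∈ Set.Icc (0 : ℝ) 1,
      (∃ e', IsEM e' ∧ CausalAB e' ∧ ∀ i o, γ * e' i o ≤ e i o) → γ = 0 := by
  rintro γ ⟨hγ0, hγ1⟩ ⟨e', ⟨hpos, hsum⟩, hc, hle⟩
  by_contra hne
  have hγpos : 0 < γ := lt_of_le_of_ne hγ0 (Ne.symm hne)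
  -- margA e' iA false oA = 0
  have hmpos : 0 ≤ margA e' iA false oA :=
    Finset.sum_nonneg fun _ _ => hpos _ _
  have h1' : γ * margA e' iA false oA ≤ 0 := h0 ▸ margA_le e e' γ hle iA false oA
  have hmz : margA e' iA false oA = 0 := by nlinarith
  have hmz' : margA e' iA true oA = 0 := (hc iA true false oA).trans hmz
  -- margA e' iA true (!oA) = 1
  have hs' : margA e' iA true oA + margA e' iA true (!oA) = 1 :=
    (marg_split e' iA true oA).trans (hsum _)
  have hm1 : margA e' iA true (!oA) = 1 := by linarith
  -- margA e iA true (!oA) = 0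
  have hs : margA e iA true oA + margA e iA true (!oA) = 1 :=
    (marg_split e iA true oA).trans (he.2 _)
  have hez : margA e iA true (!oA) = 0 := by linarith
  have : γ * margA e' iA true (!oA) ≤ margA e iA true (!oA) :=
    margA_le e e' γ hle iA true (!oA)
  rw [hm1, hez, mul_one] at this
  linarith
end

section
/- Let e be a family of probability distributions on output tuples indexed by input tuples on a finite causal scenario, and suppose γ ∈ [0,1] and e^Ω is an empirical model compatible with a causal order Ω such that γ · e^Ω ≤ e componentwise. Then for any two lowersets U, V of the input structure and any joint output assignment o on U ∩ V, γ ≤ 1 − |e_i|_U|_{U∩V}(o) − e_i|_V|_{U∩V}(o)|, where e_i|_X|_{U∩V} denotes the marginal of e_i restricted first to X and then to U ∩ V. -/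
open scoped Classical

/-- The marginal of the distribution `e i` onto the set of events `S`: the
probability of the joint output assignment `o` restricted to `S`, obtained by
summing over the outputs of events outside `S`. -/
noncomputable def marg {Ω : Type*} [Fintype Ω] {I O : Ω → Type*}
    [∀ ω, Fintype (O ω)]
    (e : (∀ ω, I ω) → (∀ ω, O ω) → ℝ) (i : ∀ ω, I ω) (S : Set Ω)
    (o : ∀ ω, O ω) : ℝ :=
  ∑ f ∈ Finset.univ.filter (fun f : ∀ ω, O ω => ∀ ω ∈ S, f ω = o ω), e i f

/-- general upper bound on the causal fraction. If `γ · e^Ω ≤ e`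
componentwise for an empirical model `e^Ω` compatible with the causal order
(its marginal onto any lowerset depends only on the inputs at events in that
lowerset), then for any lowersets `U, V` and inputs agreeing on `U ∩ V`, `γ` is
bounded by `1` minus the discrepancy of the corresponding marginals of `e`. -/
theorem causalFraction_upper_bound_general
    {Ω : Type*} [Fintype Ω] [PartialOrder Ω] {I O : Ω → Type*}
    [∀ ω, Fintype (I ω)] [∀ ω, Fintype (O ω)]
    (e eΩ : (∀ ω, I ω) → (∀ ω, O ω) → ℝ)
    (he : ∀ i, (∀ o, 0 ≤ e i o) ∧ (∑ o, e i o = 1))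
    (heΩ : ∀ i, (∀ o, 0 ≤ eΩ i o) ∧ (∑ o, eΩ i o = 1))
    (hcomp : ∀ (lam : LowerSet Ω) (i j : ∀ ω, I ω),
      (∀ ω ∈ lam, i ω = j ω) → ∀ o, marg eΩ i (lam : Set Ω) o = marg eΩ j (lam : Set Ω) o)
    (γ : ℝ) (hγ : γ ∈ Set.Icc (0 : ℝ) 1)
    (hle : ∀ i o, γ * eΩ i o ≤ e i o) :
    ∀ (U V : LowerSet Ω) (iU iV : ∀ ω, I ω),
      (∀ ω ∈ (U ⊓ V : LowerSet Ω), iU ω = iV ω) →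
      ∀ o : ∀ ω, O ω,
        γ ≤ 1 - |marg e iU ((U ⊓ V : LowerSet Ω) : Set Ω) o -
                  marg e iV ((U ⊓ V : LowerSet Ω) : Set Ω) o| := by
  intro U V iU iV hagree o
  set W : Set Ω := ((U ⊓ V : LowerSet Ω) : Set Ω) with hW
  have hE := hcomp (U ⊓ V) iU iV hagree o
  set S : Finset (∀ ω, O ω) :=
    Finset.univ.filter (fun f : ∀ ω, O ω => ∀ ω ∈ W, f ω = o ω) with hS
  have key : ∀ i : ∀ ω, I ω,
      γ * marg eΩ i W o ≤ marg e i W o ∧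
      marg e i W o + γ * (1 - marg eΩ i W o) ≤ 1 := by
    intro i
    have h1 : γ * marg eΩ i W o ≤ marg e i W o := by
      rw [marg, marg, Finset.mul_sum]
      exact Finset.sum_le_sum fun f _ => hle i f
    constructor
    · exact h1
    · have hsplit : ∀ (g : (∀ ω, I ω) → (∀ ω, O ω) → ℝ),
          (∑ f ∈ S, g i f) + (∑ f ∈ Sᶜ, g i f) = ∑ f, g i f := by
        intro g
        rw [Finset.sum_add_sum_compl]
      have hc1 : (∑ f ∈ Sᶜ, eΩ i f) = 1 - marg eΩ i W o := by
        have := hsplit eΩ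
        rw [(heΩ i).2] at this
        have : marg eΩ i W o + (∑ f ∈ Sᶜ, eΩ i f) = 1 := this
        linarith
      have hc2 : marg e i W o + (∑ f ∈ Sᶜ, e i f) = 1 := by
        have := hsplit e
        rw [(he i).2] at this
        exact this
      have h2 : γ * (∑ f ∈ Sᶜ, eΩ i f) ≤ ∑ f ∈ Sᶜ, e i f := by
        rw [Finset.mul_sum]
        exact Finset.sum_le_sum fun f _ => hle i f
      rw [← hc1]
      linarith
  obtain ⟨hU1, hU2⟩ := key iU
  obtain ⟨hV1, hV2⟩ := key iV
  rw [hE] at hU1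
  obtain ⟨hγ0, hγ1⟩ := hγ
  have habs : |marg e iU W o - marg e iV W o| ≤ 1 - γ := by
    rw [abs_le]
    constructor <;> nlinarith [marg eΩ iV W o]
  linarith
end
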